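/- arXiv:1707.02390 — 5 statements merged into one kernel-verified Lean document; each statement's English description precedes it below -/
import Mathlib

section
/- The graph G = K_{2k−1} + mK₁ (the join of a complete graph on 2k−1 vertices with m isolated vertices) satisfies σ_t(G) = 2kt − t for every t with 4 ≤ t ≤ m, but G does not contain k vertex-disjoint cycles. -/
/-- `G` contains `k` pairwise vertex-disjoint cycles. -/
def DisjointCycles {V : Type*} (G : SimpleGraph V) (k : ℕ) : Prop :=
  ∃ f : Fin k → Σ v : V, G.Walk v v,
    (∀ i, (f i).2.IsCycle) ∧
    ∀ i j, i ≠ j → ∀ v : V, v ∈ (f i).2.support → v ∉ (f j).2.support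

/-- The join `K_a + b·K₁`: a complete graph on `a` vertices joined to `b`
independent vertices. -/
def joinGraph (a b : ℕ) : SimpleGraph (Fin a ⊕ Fin b) where
  Adj x y := x ≠ y ∧ (x.isLeft ∨ y.isLeft)
  symm := by
    constructor
    rintro x y ⟨h1, h2⟩
    exact ⟨h1.symm, h2.symm⟩
  loopless := by
    constructor
    rintro x ⟨h, -⟩
    exact h rfl

instance (a b : ℕ) : DecidableRel (joinGraph a b).Adj := fun x y =>
  inferInstanceAs (Decidable (x ≠ y ∧ (x.isLeft ∨ y.isLeft)))

/-!
The `2k - 1` clique vertices cover every edge, and a cycle cannot have all of its (at least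
three) edges at a single vertex, so each of `k` disjoint cycles would need two clique vertices
of its own. An independent set with two or more vertices avoids the clique, and every other
vertex has degree `2k - 1`.
-/

open Finset SimpleGraph

namespace SimpleGraph

variable {V : Type*} {G : SimpleGraph V}

/-- Three consecutive edges of a cycle cannot all be covered by a single vertex. -/
lemma Walk.IsCycle.exists_two_mem_support_of_isVertexCover {L : Set V}
    (hL : G.IsVertexCover L) {v : V} {c : G.Walk v v} (hc : c.IsCycle) :
    ∃ p ∈ c.support, ∃ q ∈ c.support, p ≠ q ∧ p ∈ L ∧ q ∈ L := by
  have hlen := hc.three_le_length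
  have h01 := c.adj_getVert_succ (i := 0) (by omega)
  have h12 := c.adj_getVert_succ (i := 1) (by omega)
  have h23 := c.adj_getVert_succ (i := 2) (by omega)
  have h02 : c.getVert 0 ≠ c.getVert 2 := fun h =>
    absurd (hc.getVert_injOn' (by simp) (by simp only [Set.mem_ofPred_eq]; omega) h) (by omega)
  have h13 : c.getVert 1 ≠ c.getVert 3 := fun h =>
    absurd (hc.getVert_injOn (by simp; omega) (by simp; omega) h) (by omega)
  have hmem := c.getVert_mem_support
  by_cases h1 : c.getVert 1 ∈ L
  · rcases hL h23 with h2 | h3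
    · exact ⟨_, hmem 1, _, hmem 2, h12.ne, h1, h2⟩
    · exact ⟨_, hmem 1, _, hmem 3, h13, h1, h3⟩
  · have h0 := (hL h01).resolve_right h1
    have h2 := (hL h12).resolve_left h1
    exact ⟨_, hmem 0, _, hmem 2, h02, h0, h2⟩

end SimpleGraph

theorem DisjointCycles.two_mul_le_card {V : Type*} [DecidableEq V] {G : SimpleGraph V} {k : ℕ}
    (h : DisjointCycles G k) {L : Finset V} (hL : G.IsVertexCover L) : 2 * k ≤ #L := by
  obtain ⟨f, hcyc, hdisj⟩ := h
  set S : Fin k → Finset V := fun i => (f i).2.support.toFinset ∩ L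
  have hS : ∀ i, 2 ≤ #(S i) := by
    intro i
    obtain ⟨p, hp, q, hq, hpq, hpL, hqL⟩ :=
      (hcyc i).exists_two_mem_support_of_isVertexCover hL
    exact one_lt_card.mpr ⟨p, mem_inter.mpr ⟨List.mem_toFinset.mpr hp, hpL⟩,
      q, mem_inter.mpr ⟨List.mem_toFinset.mpr hq, hqL⟩, hpq⟩
  have hSdisj : (↑(univ : Finset (Fin k)) : Set (Fin k)).PairwiseDisjoint S := by
    intro i _ j _ hij
    refine disjoint_left.mpr fun x hxi hxj => ?_
    simp only [S, mem_inter, List.mem_toFinset] at hxi hxj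
    exact hdisj i j hij x hxi.1 hxj.1
  calc 2 * k = ∑ _i : Fin k, 2 := by simp [mul_comm]
    _ ≤ ∑ i, #(S i) := sum_le_sum fun i _ => hS i
    _ = #(univ.biUnion S) := (card_biUnion hSdisj).symm
    _ ≤ #L := card_le_card <| biUnion_subset.mpr fun i _ => inter_subset_right

namespace joinGraph

variable {a b : ℕ}

abbrev cliquePart (a b : ℕ) : Finset (Fin a ⊕ Fin b) := univ.map Function.Embedding.inl

lemma mem_cliquePart {x : Fin a ⊕ Fin b} : x ∈ cliquePart a b ↔ x.isLeft := by
  cases x <;> simp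

lemma card_cliquePart : #(cliquePart a b) = a := by simp

lemma isVertexCover_cliquePart : (joinGraph a b).IsVertexCover (cliquePart a b) := by
  intro x y hxy
  simpa only [mem_coe, mem_cliquePart] using hxy.2

lemma degree_inr (v : Fin b) : (joinGraph a b).degree (.inr v) = a := by
  have : (joinGraph a b).neighborFinset (.inr v) = cliquePart a b := by
    ext x
    rw [mem_neighborFinset, mem_cliquePart]
    cases x <;> simp [joinGraph]
  rw [← card_neighborFinset_eq_degree, this, card_cliquePart]

lemma eq_inr_of_isIndepSet {s : Finset (Fin a ⊕ Fin b)} (hs : (joinGraph a b).IsIndepSet s)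
    (hcard : 2 ≤ #s) {x : Fin a ⊕ Fin b} (hx : x ∈ s) : ∃ v, x = .inr v := by
  cases x with
  | inr v => exact ⟨v, rfl⟩
  | inl l =>
    obtain ⟨y, hy, hyx⟩ := exists_mem_ne hcard (.inl l)
    exact absurd ⟨hyx.symm, Or.inl rfl⟩ (hs hx hy hyx.symm)

lemma sum_degree_of_isIndepSet {s : Finset (Fin a ⊕ Fin b)}
    (hs : (joinGraph a b).IsIndepSet s) (hcard : 2 ≤ #s) :
    ∑ x ∈ s, (joinGraph a b).degree x = #s * a := by
  rw [sum_congr rfl fun x hx => ?_, sum_const, smul_eq_mul]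
  obtain ⟨v, rfl⟩ := eq_inr_of_isIndepSet hs hcard hx
  exact degree_inr v

lemma isIndepSet_map_inr (s : Finset (Fin b)) :
    (joinGraph a b).IsIndepSet ↑(s.map (Function.Embedding.inr (α := Fin a))) := by
  intro x hx y hy _ hxy
  simp only [coe_map, Set.mem_image, mem_coe] at hx hy
  obtain ⟨x, -, rfl⟩ := hx
  obtain ⟨y, -, rfl⟩ := hy
  simp [joinGraph] at hxy

lemma not_disjointCycles {k : ℕ} (hk : 0 < k) :
    ¬ DisjointCycles (joinGraph (2 * k - 1) b) k := by
  intro h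
  have := h.two_mul_le_card isVertexCover_cliquePart
  rw [card_cliquePart] at this
  omega

end joinGraph

open joinGraph in
theorem sharpness_general (k m : ℕ) (hk : 2 ≤ k) :
    (∀ t : ℕ, 4 ≤ t → t ≤ m →
      (∃ s : Finset (Fin (2 * k - 1) ⊕ Fin m), s.card = t ∧
        (∀ x ∈ s, ∀ y ∈ s, x ≠ y → ¬ (joinGraph (2 * k - 1) m).Adj x y)) ∧
      (∀ s : Finset (Fin (2 * k - 1) ⊕ Fin m), s.card = t →
        (∀ x ∈ s, ∀ y ∈ s, x ≠ y → ¬ (joinGraph (2 * k - 1) m).Adj x y) →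
        ∑ v ∈ s, (joinGraph (2 * k - 1) m).degree v = 2 * k * t - t)) ∧
    ¬ DisjointCycles (joinGraph (2 * k - 1) m) k := by
  refine ⟨fun t ht4 htm => ⟨?_, fun s hcard hind => ?_⟩, not_disjointCycles (by omega)⟩
  · obtain ⟨s, -, hs⟩ := exists_subset_card_eq (s := (univ : Finset (Fin m)))
      (by simpa using htm)
    exact ⟨s.map .inr, by simpa using hs, isIndepSet_map_inr s⟩
  · rw [sum_degree_of_isIndepSet hind (by omega), hcard, mul_comm, Nat.sub_one_mul]

/-- Sharpness example: `G = K_{2k-1} + m·K₁` satisfies `σ_t(G) = 2kt - t` for every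
`4 ≤ t ≤ m` (there is an independent `t`-set, and every independent `t`-set has degree
sum exactly `2kt - t`), yet `G` has no `k` disjoint cycles. -/
theorem sharpness (k m : ℕ) (hk : 2 ≤ k) (hm : 4 ≤ m) :
    (∀ t : ℕ, 4 ≤ t → t ≤ m →
      (∃ s : Finset (Fin (2 * k - 1) ⊕ Fin m), s.card = t ∧
        (∀ x ∈ s, ∀ y ∈ s, x ≠ y → ¬ (joinGraph (2 * k - 1) m).Adj x y)) ∧
      (∀ s : Finset (Fin (2 * k - 1) ⊕ Fin m), s.card = t →
        (∀ x ∈ s, ∀ y ∈ s, x ≠ y → ¬ (joinGraph (2 * k - 1) m).Adj x y) →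
        ∑ v ∈ s, (joinGraph (2 * k - 1) m).degree v = 2 * k * t - t)) ∧
    ¬ DisjointCycles (joinGraph (2 * k - 1) m) k :=
  sharpness_general k m hk
end

section
/- Let C₁,…,C_k be k vertex-disjoint cycles of a graph G chosen so that the total number of vertices ∪V(C_i) is minimal among all collections of k disjoint cycles. Then for any vertex x outside all the cycles and any index i, the number of edges from x to C_i is at most 3; moreover if x has exactly 3 neighbors on C_i then |C_i| = 3, and if x has exactly 2 neighbors on C_i then |C_i| ≤ 4. -/
/-- A family of `k` pairwise vertex-disjoint cycles in `G`. -/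
def CycleFamily {V : Type*} (G : SimpleGraph V) (k : ℕ)
    (f : Fin k → Σ v : V, G.Walk v v) : Prop :=
  (∀ i, (f i).2.IsCycle) ∧
  ∀ i j, i ≠ j → ∀ v : V, v ∈ (f i).2.support → v ∉ (f j).2.support

/-- The total number of vertices covered by a family of cycles. -/
def famCard {V : Type*} [DecidableEq V] {G : SimpleGraph V} {k : ℕ}
    (f : Fin k → Σ v : V, G.Walk v v) : ℕ :=
  (Finset.univ.biUnion fun i : Fin k => (f i).2.support.toFinset).card

/-!
Replacing `Cᵢ` by the cycle `x u … w x`, where `u ⇝ w` is one of the two arcs of `Cᵢ` between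
neighbours `u ≠ w` of `x`, keeps the family disjoint; by minimality both arcs therefore have
length at least `|Cᵢ| - 2`. As the arcs add up to `|Cᵢ|`, two neighbours force `|Cᵢ| ≤ 4`, and on
a 4-cycle every neighbour other than `u` is the vertex opposite `u`, so there are at most two.
-/

namespace SimpleGraph.Walk

variable {V : Type*} {G : SimpleGraph V}

lemma IsCycle.card_support_toFinset [DecidableEq V] {v : V} {c : G.Walk v v} (hc : c.IsCycle) :
    c.support.toFinset.card = c.length := by
  have hsupp : c.support.toFinset = c.support.tail.toFinset := by
    rw [← c.cons_tail_support, List.toFinset_cons, List.tail_cons, Finset.insert_eq_self]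
    exact List.mem_toFinset.2 (end_mem_tail_support hc.not_nil)
  rw [hsupp, List.toFinset_card_of_nodup hc.support_nodup, List.length_tail, length_support,
    Nat.add_sub_cancel]

lemma IsCycle.isPath_dropUntil [DecidableEq V] {u w : V} {c : G.Walk u u} (hc : c.IsCycle)
    (hw : w ∈ c.support) (hwu : w ≠ u) : (c.dropUntil w hw).IsPath :=
  IsCycle.isPath_of_append_right (not_nil_of_ne hwu.symm) (by rwa [take_spec])

lemma IsPath.isCycle_cons_concat {x u w : V} {p : G.Walk u w} (hp : p.IsPath)
    (hx : x ∉ p.support) (hxu : G.Adj x u) (hwx : G.Adj w x) (huw : u ≠ w) :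
    (cons hxu (p.concat hwx)).IsCycle := by
  refine (cons_isCycle_iff _ _).2 ⟨hp.concat hx hwx, fun he => ?_⟩
  rw [edges_concat, List.concat_eq_append, List.mem_append, List.mem_singleton,
    Sym2.eq_iff] at he
  rcases he with he | ⟨rfl, -⟩ | ⟨-, rfl⟩
  · exact hx (p.fst_mem_support_of_mem_edges he)
  · exact G.loopless.irrefl _ hwx
  · exact huw rfl

end SimpleGraph.Walk

open SimpleGraph Walk

namespace CycleFamily

variable {V : Type*} {G : SimpleGraph V} {k : ℕ}
  {f : Fin k → Σ v : V, G.Walk v v}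

lemma update (hf : CycleFamily G k f) (i : Fin k) {v : V} {D : G.Walk v v} (hD : D.IsCycle)
    (hdisj : ∀ j ≠ i, ∀ y ∈ D.support, y ∉ (f j).2.support) :
    CycleFamily G k (Function.update f i ⟨v, D⟩) := by
  refine ⟨fun j => ?_, fun j l hjl y hy hy' => ?_⟩
  · rcases eq_or_ne j i with rfl | hj
    · rw [Function.update_self]
      exact hD
    · rw [Function.update_of_ne hj]
      exact hf.1 j
  · rcases eq_or_ne j i with rfl | hj
    · rw [Function.update_self] at hy
      rw [Function.update_of_ne hjl.symm] at hy'
      exact hdisj l hjl.symm y hy hy'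
    · rw [Function.update_of_ne hj] at hy
      rcases eq_or_ne l i with rfl | hl
      · rw [Function.update_self] at hy'
        exact hdisj j hj y hy' hy
      · rw [Function.update_of_ne hl] at hy'
        exact hf.2 j l hjl y hy hy'

variable [DecidableEq V]

lemma famCard_eq_sum_length (hf : CycleFamily G k f) :
    famCard f = ∑ j, (f j).2.length := by
  rw [famCard, Finset.card_biUnion]
  · exact Finset.sum_congr rfl fun j _ => (hf.1 j).card_support_toFinset
  · intro j _ l _ hjl
    exact Finset.disjoint_left.2 fun y hy hy' =>
      hf.2 j l hjl y (List.mem_toFinset.1 hy) (List.mem_toFinset.1 hy')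

lemma length_le_of_minimal (hf : CycleFamily G k f)
    (hmin : ∀ g : Fin k → Σ v : V, G.Walk v v, CycleFamily G k g → famCard f ≤ famCard g)
    (i : Fin k) {v : V} {D : G.Walk v v} (hD : D.IsCycle)
    (hdisj : ∀ j ≠ i, ∀ y ∈ D.support, y ∉ (f j).2.support) :
    (f i).2.length ≤ D.length := by
  have hg := hf.update i hD hdisj
  have hlen (j : Fin k) : (Function.update f i ⟨v, D⟩ j).2.length =
      Function.update (fun j => (f j).2.length) i D.length j :=
    Function.apply_update (fun _ s => s.2.length) f i _ j
  have hle := hmin _ hg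
  rw [hf.famCard_eq_sum_length, hg.famCard_eq_sum_length, Finset.sum_congr rfl fun j _ => hlen j,
    Finset.sum_update_of_mem (Finset.mem_univ i),
    Finset.sdiff_singleton_eq_erase, ← Finset.add_sum_erase _ _ (Finset.mem_univ i)] at hle
  omega

/-- The walk `x → u ⇝ w → x` is a cycle of length `p.length + 2` avoiding every `Cⱼ`, `j ≠ i`. -/
lemma length_le_length_add_two_of_isPath (hf : CycleFamily G k f)
    (hmin : ∀ g : Fin k → Σ v : V, G.Walk v v, CycleFamily G k g → famCard f ≤ famCard g)
    {x : V} (hx : ∀ j, x ∉ (f j).2.support) {i : Fin k} {u w : V}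
    (hxu : G.Adj x u) (hxw : G.Adj x w) (huw : u ≠ w) {p : G.Walk u w} (hp : p.IsPath)
    (hpi : ∀ y ∈ p.support, y ∈ (f i).2.support) :
    (f i).2.length ≤ p.length + 2 := by
  have hxp : x ∉ p.support := fun h => hx i (hpi x h)
  refine (hf.length_le_of_minimal hmin i (hp.isCycle_cons_concat hxp hxu hxw.symm huw)
    fun j hj y hy hyj => ?_).trans (by simp)
  rw [support_cons, support_concat, List.mem_cons, List.mem_append, List.mem_singleton] at hy
  rcases hy with rfl | hy | rfl
  · exact hx j hyj
  · exact hf.2 i j hj.symm y (hpi y hy) hyj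
  · exact hx j hyj

/-- Both `u`–`w` arcs of `Cᵢ` close up through `x`, so neither is shorter than `|Cᵢ| - 2`;
here `n` is the length of the arc that starts at `u`. -/
lemma exists_getVert_rotate_eq (hf : CycleFamily G k f)
    (hmin : ∀ g : Fin k → Σ v : V, G.Walk v v, CycleFamily G k g → famCard f ≤ famCard g)
    {x : V} (hx : ∀ j, x ∉ (f j).2.support) {i : Fin k} {u w : V}
    (hxu : G.Adj x u) (hxw : G.Adj x w) (huw : u ≠ w)
    (hu : u ∈ (f i).2.support) (hw : w ∈ (f i).2.support) :
    ∃ n ≤ 2, ((f i).2.rotate u hu).getVert n = w ∧ (f i).2.length ≤ n + 2 := by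
  set c := (f i).2.rotate u hu
  have hc : c.IsCycle := (hf.1 i).rotate hu
  have hwc : w ∈ c.support := (mem_support_rotate_iff _ _ _).2 hw
  have hci : ∀ y ∈ c.support, y ∈ (f i).2.support := fun y => (mem_support_rotate_iff _ _ _).1
  have hlen : (c.takeUntil w hwc).length + (c.dropUntil w hwc).length = (f i).2.length := by
    rw [← length_append, take_spec, length_rotate]
  have hfirst := hf.length_le_length_add_two_of_isPath hmin hx hxu hxw huw
    (hc.isPath_takeUntil hwc) fun y hy => hci y (support_takeUntil_subset_support _ _ hy)
  have hsecond := hf.length_le_length_add_two_of_isPath hmin hx hxw hxu huw.symm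
    (hc.isPath_dropUntil hwc huw.symm) fun y hy => hci y (support_dropUntil_subset_support _ _ hy)
  exact ⟨_, by omega, c.getVert_length_takeUntil hwc, hfirst⟩

variable [DecidableRel G.Adj]

lemma length_le_four_of_two_le_card_filter_adj (hf : CycleFamily G k f)
    (hmin : ∀ g : Fin k → Σ v : V, G.Walk v v, CycleFamily G k g → famCard f ≤ famCard g)
    {x : V} (hx : ∀ j, x ∉ (f j).2.support) (i : Fin k)
    (h2 : 2 ≤ ((f i).2.support.toFinset.filter (G.Adj x)).card) :
    (f i).2.length ≤ 4 := by
  obtain ⟨u, hu, w, hw, huw⟩ := Finset.one_lt_card.1 h2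
  simp only [Finset.mem_filter, List.mem_toFinset] at hu hw
  obtain ⟨n, hn, -, hlen⟩ := hf.exists_getVert_rotate_eq hmin hx hu.2 hw.2 huw hu.1 hw.1
  omega

lemma card_filter_adj_le_two_of_length_eq_four (hf : CycleFamily G k f)
    (hmin : ∀ g : Fin k → Σ v : V, G.Walk v v, CycleFamily G k g → famCard f ≤ famCard g)
    {x : V} (hx : ∀ j, x ∉ (f j).2.support) (i : Fin k) (h4 : (f i).2.length = 4) :
    ((f i).2.support.toFinset.filter (G.Adj x)).card ≤ 2 := by
  set N := (f i).2.support.toFinset.filter (G.Adj x)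
  rcases N.eq_empty_or_nonempty with hN | ⟨u, hu⟩
  · simp [hN]
  simp only [N, Finset.mem_filter, List.mem_toFinset] at hu
  have hsub : N ⊆ {u, ((f i).2.rotate u hu.1).getVert 2} := by
    intro w hw
    simp only [N, Finset.mem_filter, List.mem_toFinset] at hw
    rcases eq_or_ne u w with rfl | huw
    · exact Finset.mem_insert_self _ _
    -- on a 4-cycle both arcs have length 2, so `w` is the vertex opposite `u`
    obtain ⟨n, hn, hnw, hlen⟩ := hf.exists_getVert_rotate_eq hmin hx hu.2 hw.2 huw hu.1 hw.1
    obtain rfl : n = 2 := by omega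
    exact Finset.mem_insert_of_mem (Finset.mem_singleton.2 hnw.symm)
  exact (Finset.card_le_card hsub).trans Finset.card_le_two

end CycleFamily

/-- Lemma 1 (Fujita et al.): if `{C₁, …, C_k}` is a minimal family of `k` disjoint
cycles, then every outside vertex `x` sends at most 3 edges to each `Cᵢ`; 3 edges force
`|Cᵢ| = 3`, and 2 edges force `|Cᵢ| ≤ 4`. -/
theorem minimal_family_edges {V : Type*} [DecidableEq V] (G : SimpleGraph V)
    [DecidableRel G.Adj] (k : ℕ) (f : Fin k → Σ v : V, G.Walk v v)
    (hf : CycleFamily G k f)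
    (hmin : ∀ g : Fin k → Σ v : V, G.Walk v v, CycleFamily G k g → famCard f ≤ famCard g)
    (x : V) (hx : ∀ i, x ∉ (f i).2.support) (i : Fin k) :
    ((f i).2.support.toFinset.filter (G.Adj x)).card ≤ 3 ∧
    (((f i).2.support.toFinset.filter (G.Adj x)).card = 3 → (f i).2.length = 3) ∧
    (((f i).2.support.toFinset.filter (G.Adj x)).card = 2 → (f i).2.length ≤ 4) := by
  have h3 : 3 ≤ (f i).2.length := (hf.1 i).three_le_length
  have hcard : ((f i).2.support.toFinset.filter (G.Adj x)).card ≤ (f i).2.length :=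
    (Finset.card_filter_le _ _).trans (hf.1 i).card_support_toFinset.le
  have h4 := hf.length_le_four_of_two_le_card_filter_adj hmin hx i
  have h2 := hf.card_filter_adj_le_two_of_length_eq_four hmin hx i
  omega
end

section
/- Let F be a forest with at least two components, C a triangle disjoint from F, and x₁,…,x_t (t ≥ 3) leaves of F coming from at least two different components. If the total number of edges from {x₁,…,x_t} to C is at least 2t+1, then the graph induced on V(F) ∪ V(C) contains two vertex-disjoint cycles, or it contains a triangle C′ such that removing V(C′) from G[V(F) ∪ V(C)] leaves a graph with fewer components than F has. -/
open Finset

namespace Finset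

variable {ι α : Type*}

theorem exists_forall_of_mul_lt_sum [Fintype ι] {s : Finset α} {k : ℕ} (p : ι → α → Prop)
    [∀ i, DecidablePred (p i)] (hs : #s ≤ k + 1)
    (h : k * Fintype.card ι < ∑ i, #(s.filter (p i))) : ∃ i, ∀ a ∈ s, p i a := by
  rw [mul_comm, ← smul_eq_mul, ← card_univ, ← sum_const] at h
  obtain ⟨i, -, hi⟩ := exists_lt_of_sum_lt h
  have : s.filter (p i) = s := eq_of_subset_of_card_le (filter_subset _ _) (by omega)
  exact ⟨i, filter_eq_self.mp this⟩

theorem exists_lt_card_filter_of_mul_lt_sum [Fintype ι] {s : Finset α} {k : ℕ}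
    (p : ι → α → Prop) [∀ i a, Decidable (p i a)]
    (h : k * #s < ∑ i, #(s.filter (p i))) : ∃ a ∈ s, k < #(univ.filter (p · a)) := by
  have hsum : ∑ i, #(s.filter (p i)) = ∑ a ∈ s, #(univ.filter (p · a)) :=
    sum_card_bipartiteAbove_eq_sum_card_bipartiteBelow p
  rw [hsum, mul_comm, ← smul_eq_mul, ← sum_const] at h
  exact exists_lt_of_sum_lt h

theorem exists_ne_ne_of_two_lt_card [DecidableEq α] {s : Finset α} (hs : 2 < #s) (a : α) :
    ∃ b ∈ s, ∃ c ∈ s, b ≠ a ∧ c ≠ a ∧ b ≠ c := by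
  obtain ⟨b, hb, c, hc, hbc⟩ := one_lt_card.mp
    ((Nat.sub_le_sub_right hs 1).trans (pred_card_le_card_erase (a := a)))
  exact ⟨b, mem_of_mem_erase hb, c, mem_of_mem_erase hc, ne_of_mem_erase hb, ne_of_mem_erase hc,
    hbc⟩

end Finset

namespace SimpleGraph

variable {V : Type*} {G : SimpleGraph V}

theorem IsNClique.exists_triple_eq_of_mem [DecidableEq V] {s : Finset V} {a : V}
    (hs : G.IsNClique 3 s) (ha : a ∈ s) :
    ∃ b c, G.Adj a b ∧ G.Adj a c ∧ G.Adj b c ∧ s = {a, b, c} := by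
  obtain ⟨b, c, hbc, hs'⟩ := Finset.card_eq_two.mp (hs.erase_of_mem ha).card_eq
  have hb : b ∈ s.erase a := by simp [hs']
  have hc : c ∈ s.erase a := by simp [hs']
  refine ⟨b, c, hs.isClique ha (mem_of_mem_erase hb) (ne_of_mem_erase hb).symm,
    hs.isClique ha (mem_of_mem_erase hc) (ne_of_mem_erase hc).symm,
    hs.isClique (mem_of_mem_erase hb) (mem_of_mem_erase hc) hbc, ?_⟩
  rw [← Finset.insert_erase ha, hs']

theorem Walk.IsPath.isCycle_cons_concat_s6 {u w β : V} {p : G.Walk u w} (hp : p.IsPath)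
    (huw : u ≠ w) (hβ : β ∉ p.support) (hu : G.Adj β u) (hw : G.Adj w β) :
    (Walk.cons hu (p.concat hw)).IsCycle := by
  rw [Walk.isCycle_iff_isPath_tail_and_le_length]
  refine ⟨by simpa using hp.concat hβ hw, ?_⟩
  have : p.length ≠ 0 := fun h => huw (Walk.eq_of_length_eq_zero h)
  simp only [Walk.length_cons, Walk.length_concat]
  omega

theorem Walk.IsCycle.induce {S : Set V} {a : V} {c : G.Walk a a} (h : c.IsCycle)
    (hS : ∀ v ∈ c.support, v ∈ S) : (c.induce S hS).IsCycle :=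
  Walk.IsCycle.of_map (f := (Embedding.induce S).toHom) ((c.map_induce hS).symm ▸ h)

theorem disjointCycles_induce_two {S : Set V} {a b : V} {c₁ : G.Walk a a} {c₂ : G.Walk b b}
    (h₁ : c₁.IsCycle) (h₂ : c₂.IsCycle) (hS₁ : ∀ v ∈ c₁.support, v ∈ S)
    (hS₂ : ∀ v ∈ c₂.support, v ∈ S) (hdisj : ∀ v ∈ c₁.support, v ∉ c₂.support) :
    DisjointCycles (G.induce S) 2 := by
  refine ⟨![⟨_, c₁.induce S hS₁⟩, ⟨_, c₂.induce S hS₂⟩], fun i => ?_, fun i j hij v hi hj => ?_⟩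
  · fin_cases i
    · exact h₁.induce hS₁
    · exact h₂.induce hS₂
  · fin_cases i <;> fin_cases j <;> simp_all

theorem neighborSet_induce_subsingleton_of_ncard_le_one [Finite V] {A : Set V} {z : V} (hz : z ∈ A)
    (h : {y ∈ A | G.Adj z y}.ncard ≤ 1) : ((G.induce A).neighborSet ⟨z, hz⟩).Subsingleton :=
  fun a ha b hb => Subtype.ext <|
    (Set.ncard_le_one_iff (Set.toFinite _)).mp h ⟨a.2, ha⟩ ⟨b.2, hb⟩

theorem Reachable.exists_isPath_diff_singleton_of_induce {S : Set V} {z : V} (hz : z ∈ S)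
    (hleaf : ((G.induce S).neighborSet ⟨z, hz⟩).Subsingleton) {u w : S} (hu : u.1 ≠ z)
    (hw : w.1 ≠ z) (h : (G.induce S).Reachable u w) :
    ∃ p : G.Walk u w, p.IsPath ∧ ∀ v ∈ p.support, v ∈ S \ {z} := by
  obtain ⟨q, hq⟩ := h.exists_isPath
  have hzq := hq.isTrail.not_mem_support_of_subsingleton_neighborSet
    (fun h => hu (congrArg Subtype.val h).symm) (fun h => hw (congrArg Subtype.val h).symm) hleaf
  refine ⟨q.map (Embedding.induce S).toHom, hq.map (Embedding.induce (G := G) S).injective, ?_⟩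
  intro v hv
  obtain ⟨a, ha, rfl⟩ := List.mem_map.mp (Walk.support_map _ q ▸ hv)
  exact ⟨a.2, fun (h : a.1 = z) => hzq ((Subtype.ext h : a = ⟨z, hz⟩) ▸ ha)⟩

theorem card_connectedComponent_induce_diff_singleton_le [Finite V] {S : Set V} {z : V}
    (hz : z ∈ S) (hleaf : ((G.induce S).neighborSet ⟨z, hz⟩).Subsingleton) :
    Nat.card (G.induce (S \ {z})).ConnectedComponent ≤
      Nat.card (G.induce S).ConnectedComponent := by
  refine Nat.card_le_card_of_injective
    (ConnectedComponent.map (G.induceHomOfLE Set.sdiff_subset).toHom) ?_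
  refine ConnectedComponent.ind₂ fun a b hab => ?_
  simp only [ConnectedComponent.map_mk, ConnectedComponent.eq] at hab ⊢
  obtain ⟨p, -, hp⟩ := hab.exists_isPath_diff_singleton_of_induce hz hleaf
    (u := ⟨a.1, a.2.1⟩) (w := ⟨b.1, b.2.1⟩) a.2.2 b.2.2
  exact ⟨p.induce _ hp⟩

theorem card_connectedComponent_induce_insert_lt [Finite V] {S : Set V} {β u w : V}
    (hu : u ∈ S) (hw : w ∈ S) (hβu : G.Adj β u) (hβw : G.Adj β w)
    (huw : ¬ (G.induce S).Reachable ⟨u, hu⟩ ⟨w, hw⟩) :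
    Nat.card (G.induce (insert β S)).ConnectedComponent <
      Nat.card (G.induce S).ConnectedComponent := by
  let f := ConnectedComponent.map (G.induceHomOfLE (Set.subset_insert β S)).toHom
  have hβ : ∀ v (hv : v ∈ S), G.Adj β v →
      f ((G.induce S).connectedComponentMk ⟨v, hv⟩) =
        (G.induce (insert β S)).connectedComponentMk ⟨β, Set.mem_insert β S⟩ :=
    fun v hv h => ConnectedComponent.eq.mpr (Adj.reachable (G := G.induce _) h.symm)
  have hsurj : Function.Surjective f := by
    refine ConnectedComponent.ind fun v => ?_
    obtain ⟨v, rfl | hv⟩ := v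
    · exact ⟨_, hβ u hu hβu⟩
    · exact ⟨_, ConnectedComponent.map_mk _ (⟨v, hv⟩ : S)⟩
  have hninj : ¬ Function.Injective f := fun hf =>
    huw (ConnectedComponent.eq.mp (hf ((hβ u hu hβu).trans (hβ w hw hβw).symm)))
  have := Fintype.ofFinite (G.induce S).ConnectedComponent
  have := Fintype.ofFinite (G.induce (insert β S)).ConnectedComponent
  simp only [Nat.card_eq_fintype_card]
  exact Fintype.card_lt_of_surjective_not_injective f hsurj hninj

theorem card_connectedComponent_induce_insert_diff_singleton_lt [Finite V] {S : Set V}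
    {z u w β : V} (hz : z ∈ S) (hleaf : ((G.induce S).neighborSet ⟨z, hz⟩).Subsingleton)
    (hu : u ∈ S) (hw : w ∈ S) (huz : u ≠ z) (hwz : w ≠ z) (hβu : G.Adj β u)
    (hβw : G.Adj β w) (huw : ¬ (G.induce S).Reachable ⟨u, hu⟩ ⟨w, hw⟩) :
    Nat.card (G.induce (insert β (S \ {z}))).ConnectedComponent <
      Nat.card (G.induce S).ConnectedComponent := by
  have huw' : ¬ (G.induce (S \ {z})).Reachable ⟨u, hu, huz⟩ ⟨w, hw, hwz⟩ :=
    fun h => huw (h.map (G.induceHomOfLE Set.sdiff_subset).toHom)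
  exact (card_connectedComponent_induce_insert_lt _ _ hβu hβw huw').trans_le
    (card_connectedComponent_induce_diff_singleton_le hz hleaf)

theorem disjointCycles_two_of_reachable {A B : Set V} (hAB : Disjoint A B)
    {z u w β c₁ c₂ : V} (hz : z ∈ A) (hleaf : ((G.induce A).neighborSet ⟨z, hz⟩).Subsingleton)
    (hu : u ∈ A) (hw : w ∈ A) (huz : u ≠ z) (hwz : w ≠ z) (huw : u ≠ w)
    (hβ : β ∈ B) (hc₁ : c₁ ∈ B) (hc₂ : c₂ ∈ B) (hβc₁ : β ≠ c₁) (hβc₂ : β ≠ c₂)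
    (hzc₁ : G.Adj z c₁) (hzc₂ : G.Adj z c₂) (hc₁₂ : G.Adj c₁ c₂)
    (hβu : G.Adj β u) (hβw : G.Adj β w) (h : (G.induce A).Reachable ⟨u, hu⟩ ⟨w, hw⟩) :
    DisjointCycles (G.induce (A ∪ B)) 2 := by
  obtain ⟨p, hp, hpA⟩ := h.exists_isPath_diff_singleton_of_induce hz hleaf huz hwz
  have hβA := Set.disjoint_right.mp hAB hβ
  have hβp : β ∉ p.support := fun h => hβA (hpA β h).1
  refine disjointCycles_induce_two (hp.isCycle_cons_concat_s6 huw hβp hβu hβw.symm)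
    ((Walk.IsPath.of_adj hzc₂).isCycle_cons_concat_s6 hzc₂.ne ?_ hzc₁.symm hc₁₂.symm) ?_ ?_ ?_
  all_goals simp only [Walk.support_cons, Walk.support_concat, Walk.support_nil,
    List.mem_cons, List.mem_append, List.not_mem_nil, or_false]
  · exact fun h => h.elim hzc₁.ne' hc₁₂.ne
  · rintro v (rfl | hv | rfl)
    exacts [Or.inr hβ, Or.inl (hpA v hv).1, Or.inr hβ]
  · rintro v (rfl | (rfl | rfl) | rfl)
    exacts [Or.inr hc₁, Or.inl hz, Or.inr hc₂, Or.inr hc₁]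
  · have := Set.disjoint_right.mp hAB hc₁
    have := Set.disjoint_right.mp hAB hc₂
    grind

theorem disjointCycles_or_exists_triangle_card_lt [Finite V] {A B : Set V} (hAB : Disjoint A B)
    {z u w β c₁ c₂ : V} (hB : B = {β, c₁, c₂}) (hβc₁ : β ≠ c₁) (hβc₂ : β ≠ c₂)
    (hz : z ∈ A) (hleaf : ((G.induce A).neighborSet ⟨z, hz⟩).Subsingleton)
    (hu : u ∈ A) (hw : w ∈ A) (huz : u ≠ z) (hwz : w ≠ z) (huw : u ≠ w)
    (hzc₁ : G.Adj z c₁) (hzc₂ : G.Adj z c₂) (hc₁₂ : G.Adj c₁ c₂)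
    (hβu : G.Adj β u) (hβw : G.Adj β w) :
    DisjointCycles (G.induce (A ∪ B)) 2 ∨
    ∃ c₀ c₁ c₂ : V, c₀ ∈ A ∪ B ∧ c₁ ∈ A ∪ B ∧ c₂ ∈ A ∪ B ∧
      c₀ ≠ c₁ ∧ c₀ ≠ c₂ ∧ c₁ ≠ c₂ ∧
      G.Adj c₀ c₁ ∧ G.Adj c₀ c₂ ∧ G.Adj c₁ c₂ ∧
      Nat.card (G.induce ((A ∪ B) \ {c₀, c₁, c₂})).ConnectedComponent <
        Nat.card (G.induce A).ConnectedComponent := by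
  have hβ : β ∈ B := by simp [hB]
  have hc₁ : c₁ ∈ B := by simp [hB]
  have hc₂ : c₂ ∈ B := by simp [hB]
  by_cases h : (G.induce A).Reachable ⟨u, hu⟩ ⟨w, hw⟩
  · exact .inl <| disjointCycles_two_of_reachable hAB hz hleaf hu hw huz hwz huw hβ hc₁ hc₂
      hβc₁ hβc₂ hzc₁ hzc₂ hc₁₂ hβu hβw h
  refine .inr ⟨z, c₁, c₂, .inl hz, .inr hc₁, .inr hc₂, hzc₁.ne, hzc₂.ne, hc₁₂.ne,
    hzc₁, hzc₂, hc₁₂, ?_⟩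
  have hW : (A ∪ B) \ {z, c₁, c₂} = insert β (A \ {z}) := by
    have := Set.disjoint_right.mp hAB hβ
    have := Set.disjoint_right.mp hAB hc₁
    have := Set.disjoint_right.mp hAB hc₂
    ext v
    simp only [hB, Set.mem_sdiff, Set.mem_union, Set.mem_insert_iff, Set.mem_singleton_iff]
    grind
  rw [hW]
  exact card_connectedComponent_induce_insert_diff_singleton_lt hz hleaf hu hw huz hwz hβu hβw h

end SimpleGraph

open SimpleGraph

theorem forest_triangle_lemma_general {V : Type*} [Fintype V] (G : SimpleGraph V)
    (A B : Set V) (hAB : Disjoint A B)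
    (b₀ b₁ b₂ : V) (hb : B = {b₀, b₁, b₂}) (hadj01 : G.Adj b₀ b₁) (hadj02 : G.Adj b₀ b₂)
    (hadj12 : G.Adj b₁ b₂)
    (t : ℕ) (ht : 3 ≤ t) (x : Fin t → V) (hinj : Function.Injective x)
    (hxA : ∀ i, x i ∈ A)
    (hleaf : ∀ i, {y ∈ A | G.Adj (x i) y}.ncard ≤ 1)
    (hedges : 2 * t + 1 ≤ ∑ i : Fin t, {y ∈ B | G.Adj (x i) y}.ncard) :
    DisjointCycles (G.induce (A ∪ B)) 2 ∨
    ∃ c₀ c₁ c₂ : V, c₀ ∈ A ∪ B ∧ c₁ ∈ A ∪ B ∧ c₂ ∈ A ∪ B ∧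
      c₀ ≠ c₁ ∧ c₀ ≠ c₂ ∧ c₁ ≠ c₂ ∧
      G.Adj c₀ c₁ ∧ G.Adj c₀ c₂ ∧ G.Adj c₁ c₂ ∧
      Nat.card (G.induce ((A ∪ B) \ {c₀, c₁, c₂})).ConnectedComponent <
        Nat.card (G.induce A).ConnectedComponent := by
  classical
  obtain ⟨T, hBT, hT⟩ : ∃ T : Finset V, B = T ∧ G.IsNClique 3 T :=
    ⟨{b₀, b₁, b₂}, by simp [hb], is3Clique_triple_iff.mpr ⟨hadj01, hadj02, hadj12⟩⟩
  replace hedges : 2 * t < ∑ i, #(T.filter (G.Adj (x i))) := by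
    simpa [hBT, ← Finset.coe_filter, Set.ncard_coe_finset] using hedges
  obtain ⟨i₀, hi₀⟩ := T.exists_forall_of_mul_lt_sum _ hT.card_eq.le (by rwa [Fintype.card_fin])
  obtain ⟨β, hβ, hβx⟩ := T.exists_lt_card_filter_of_mul_lt_sum (k := 2) (fun i => G.Adj (x i))
    (by rw [hT.card_eq]; omega)
  obtain ⟨j, hj, k, hk, hji₀, hki₀, hjk⟩ := Finset.exists_ne_ne_of_two_lt_card hβx i₀
  simp only [Finset.mem_filter, Finset.mem_univ, true_and] at hj hk
  obtain ⟨c₁, c₂, hβc₁, hβc₂, hc₁₂, rfl⟩ := hT.exists_triple_eq_of_mem hβ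
  exact disjointCycles_or_exists_triangle_card_lt hAB (by simp [hBT]) hβc₁.ne hβc₂.ne (hxA i₀)
    (neighborSet_induce_subsingleton_of_ncard_le_one _ (hleaf i₀)) (hxA j) (hxA k)
    (hinj.ne hji₀) (hinj.ne hki₀) (hinj.ne hjk) (hi₀ c₁ (by simp)) (hi₀ c₂ (by simp)) hc₁₂
    hj.symm hk.symm

/-- Lemma 3: `F = G[A]` a forest with at least two components, `C = G[B]` a triangle
disjoint from `F`, and `x₁, …, x_t` (`t ≥ 3`) leaves of `F` from at least two different
components sending at least `2t + 1` edges to `C`.  Then `G[A ∪ B]` contains two disjoint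
cycles, or a triangle `C'` whose removal leaves fewer components than `F` has. -/
theorem forest_triangle_lemma {V : Type*} [Fintype V] [DecidableEq V] (G : SimpleGraph V)
    (A B : Set V) (hAB : Disjoint A B)
    (hforest : (G.induce A).IsAcyclic)
    (hω : 2 ≤ Nat.card (G.induce A).ConnectedComponent)
    (b₀ b₁ b₂ : V) (hb : B = {b₀, b₁, b₂}) (hb01 : b₀ ≠ b₁) (hb02 : b₀ ≠ b₂)
    (hb12 : b₁ ≠ b₂) (hadj01 : G.Adj b₀ b₁) (hadj02 : G.Adj b₀ b₂) (hadj12 : G.Adj b₁ b₂)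
    (t : ℕ) (ht : 3 ≤ t) (x : Fin t → V) (hinj : Function.Injective x)
    (hxA : ∀ i, x i ∈ A)
    (hleaf : ∀ i, {y ∈ A | G.Adj (x i) y}.ncard ≤ 1)
    (htwo : ∃ i j, ¬ (G.induce A).Reachable ⟨x i, hxA i⟩ ⟨x j, hxA j⟩)
    (hedges : 2 * t + 1 ≤ ∑ i : Fin t, {y ∈ B | G.Adj (x i) y}.ncard) :
    DisjointCycles (G.induce (A ∪ B)) 2 ∨
    ∃ c₀ c₁ c₂ : V, c₀ ∈ A ∪ B ∧ c₁ ∈ A ∪ B ∧ c₂ ∈ A ∪ B ∧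
      c₀ ≠ c₁ ∧ c₀ ≠ c₂ ∧ c₁ ≠ c₂ ∧
      G.Adj c₀ c₁ ∧ G.Adj c₀ c₂ ∧ G.Adj c₁ c₂ ∧
      Nat.card (G.induce ((A ∪ B) \ {c₀, c₁, c₂})).ConnectedComponent <
        Nat.card (G.induce A).ConnectedComponent :=
  forest_triangle_lemma_general G A B hAB b₀ b₁ b₂ hb hadj01 hadj02 hadj12 t ht x hinj hxA hleaf
    hedges
end

section
/- Let T be a tree and x₁,…,x_m vertices of T with degrees d₁,…,d_m, each d_i ≥ 3. Then T has at least (d₁ + ⋯ + d_m) − 2(m−1) leaves. -/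
/-- Lemma 7(i): a tree with large-degree vertices `x₁, …, x_m` of degrees `d₁, …, d_m`
(each `dᵢ ≥ 3`) has at least `d₁ + ⋯ + d_m − 2(m − 1)` leaves. -/
theorem tree_leaves_lower_bound {V : Type*} [Fintype V] [DecidableEq V]
    (T : SimpleGraph V) [DecidableRel T.Adj]
    (htree : T.Connected ∧ T.IsAcyclic)
    (m : ℕ) (x : Fin m → V) (hinj : Function.Injective x)
    (d : Fin m → ℕ) (hd : ∀ i, T.degree (x i) = d i) (hd3 : ∀ i, 3 ≤ d i) :
    (∑ i : Fin m, d i) - 2 * (m - 1) ≤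
      (Finset.univ.filter fun v : V => T.degree v = 1).card := by
  classical
  obtain ⟨hconn, hacyc⟩ := htree
  rcases Nat.eq_zero_or_pos m with hm | hm
  · subst hm; simp
  -- there is a vertex of degree ≥ 3, so V is nontrivial
  have hx0 : 3 ≤ T.degree (x ⟨0, hm⟩) := by rw [hd]; exact hd3 _
  have hV2 : 1 < Fintype.card V := by
    have : 0 < T.degree (x ⟨0, hm⟩) := by omega
    rw [T.degree_pos_iff_exists_adj] at this
    obtain ⟨w, hw⟩ := this
    exact Fintype.one_lt_card_iff_nontrivial.mpr ⟨_, _, hw.ne⟩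
  -- every vertex has positive degree
  have hdeg1 : ∀ v : V, 1 ≤ T.degree v := by
    intro v
    obtain ⟨w, hw⟩ := Fintype.exists_ne_of_one_lt_card hV2 v
    have hr := (hconn.preconnected v w)
    rw [SimpleGraph.reachable_iff_reflTransGen] at hr
    rcases hr.cases_head with h | ⟨c, hc, _⟩
    · exact absurd h.symm hw
    · exact (T.degree_pos_iff_exists_adj v).mpr ⟨c, hc⟩
  -- tree edge count
  have htree' : T.IsTree := ⟨hconn, hacyc⟩
  have hedge : T.edgeFinset.card + 1 = Fintype.card V := by
    simpa using htree'.card_edgeFinset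
  have hsum : ∑ v, T.degree v = 2 * T.edgeFinset.card :=
    T.sum_degrees_eq_twice_card_edges
  -- the key identity over ℤ
  set f : V → ℤ := fun v => (T.degree v : ℤ) - 2 with hf
  have htot : ∑ v, f v = -2 := by
    have : ∑ v, f v = (∑ v, (T.degree v : ℤ)) - 2 * Fintype.card V := by
      rw [Finset.sum_sub_distrib]; simp [Finset.card_univ, mul_comm]
    rw [this]
    have : (∑ v, (T.degree v : ℤ)) = 2 * T.edgeFinset.card := by
      exact_mod_cast congrArg (Nat.cast : ℕ → ℤ) hsum
    rw [this]
    have : (T.edgeFinset.card : ℤ) + 1 = Fintype.card V := by exact_mod_cast hedge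
    linarith
  set Lset := Finset.univ.filter fun v : V => T.degree v = 1 with hL
  set Bset := Finset.univ.filter fun v : V => 3 ≤ T.degree v with hB
  -- split the sum
  have hsplit1 := Finset.sum_filter_add_sum_filter_not Finset.univ
    (fun v : V => T.degree v = 1) f
  have hsplit2 := Finset.sum_filter_add_sum_filter_not
    (Finset.univ.filter fun v : V => ¬ T.degree v = 1)
    (fun v : V => T.degree v = 2) f
  have hLsum : ∑ v ∈ Lset, f v = -(Lset.card : ℤ) := by
    have hc : ∀ v ∈ Lset, f v = -1 := by
      intro v hv
      simp only [hL, Finset.mem_filter] at hv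
      simp [hf, hv.2]
    rw [Finset.sum_congr rfl hc, Finset.sum_const]
    simp
  have hRsum : ∑ v ∈ (Finset.univ.filter fun v : V => ¬ T.degree v = 1).filter
      (fun v => T.degree v = 2), f v = 0 := by
    apply Finset.sum_eq_zero
    intro v hv
    simp only [Finset.mem_filter] at hv
    simp [hf, hv.2]
  have hBeq : (Finset.univ.filter fun v : V => ¬ T.degree v = 1).filter
      (fun v => ¬ T.degree v = 2) = Bset := by
    rw [Finset.filter_filter]
    apply Finset.filter_congr
    intro v _
    have := hdeg1 v
    constructor
    · rintro ⟨h1, h2⟩; omega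
    · intro h; omega
  have hBsum : ∑ v ∈ Bset, f v = (Lset.card : ℤ) - 2 := by
    have h2 := hsplit2
    rw [hRsum, hBeq, zero_add] at h2
    rw [htot, ← hL, hLsum] at hsplit1
    linarith [h2, hsplit1]
  -- the x i's sum
  have hxB : (Finset.univ.image x) ⊆ Bset := by
    intro v hv
    simp only [Finset.mem_image] at hv
    obtain ⟨i, _, rfl⟩ := hv
    simp only [hB, Finset.mem_filter, Finset.mem_univ, true_and]
    rw [hd]; exact hd3 i
  have hxsum : ∑ i : Fin m, ((d i : ℤ) - 2) ≤ ∑ v ∈ Bset, f v := by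
    have h1 : ∑ i : Fin m, ((d i : ℤ) - 2) = ∑ v ∈ Finset.univ.image x, f v := by
      rw [Finset.sum_image (fun a _ b _ h => hinj h)]
      exact Finset.sum_congr rfl fun i _ => by rw [hf]; simp [hd i]
    rw [h1]
    apply Finset.sum_le_sum_of_subset_of_nonneg hxB
    intro v hv hv'
    simp only [hB, Finset.mem_filter] at hv
    simp only [hf]
    have := hv.2
    omega
  have hZ : (∑ i : Fin m, (d i : ℤ)) + 2 ≤ (Lset.card : ℤ) + 2 * m := by
    have : ∑ i : Fin m, ((d i : ℤ) - 2) = (∑ i : Fin m, (d i : ℤ)) - 2 * m := by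
      rw [Finset.sum_sub_distrib]; simp [mul_comm]
    rw [this, hBsum] at hxsum
    linarith
  have hN : (∑ i : Fin m, d i) + 2 ≤ Lset.card + 2 * m := by exact_mod_cast hZ
  omega
end

section
/- Let F be a forest with ω components, each with at least 2 vertices, and S ⊆ V(F) a set containing all leaves of F. Then the sum over S of degrees in F is at most 2|S| − 2ω. -/
open Finset SimpleGraph

section Aux

variable {V : Type*} [Fintype V] [DecidableEq V] (F : SimpleGraph V) [DecidableRel F.Adj]

lemma aux_induce_supp_isTree (hforest : F.IsAcyclic) (c : F.ConnectedComponent) :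
    (F.induce c.supp).IsTree := by
  have hne : Nonempty c.supp := by
    obtain ⟨v, hv⟩ := c.exists_rep
    exact ⟨⟨v, by rw [SimpleGraph.ConnectedComponent.mem_supp_iff]; exact hv⟩⟩
  constructor
  · rw [SimpleGraph.connected_iff]
    refine ⟨?_, hne⟩
    rintro ⟨u, hu⟩ ⟨v, hv⟩
    have hr : F.Reachable u v := by
      rw [SimpleGraph.ConnectedComponent.mem_supp_iff] at hu hv
      exact SimpleGraph.ConnectedComponent.exact (hu.trans hv.symm)
    obtain ⟨p⟩ := hr
    have hsub : {x | x ∈ p.support} ⊆ c.supp := by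
      intro x hx
      have h1 : F.connectedComponentMk x = F.connectedComponentMk u :=
        SimpleGraph.ConnectedComponent.sound ⟨(p.takeUntil x hx).reverse⟩
      rw [SimpleGraph.ConnectedComponent.mem_supp_iff, h1]
      rwa [SimpleGraph.ConnectedComponent.mem_supp_iff] at hu
    have h1 : (F.induce {x | x ∈ p.support}).Reachable
        ⟨u, p.start_mem_support⟩ ⟨v, p.end_mem_support⟩ :=
      (p.connected_induce_support) _ _
    have h2 := h1.map (SimpleGraph.induceHomOfLE F hsub).toHom
    convert h2 using 2 <;> rfl
  · intro v w hw
    exact hforest (w.map (SimpleGraph.Embedding.induce c.supp).toHom)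
      (hw.map (SimpleGraph.Embedding.induce (G := F) c.supp).injective)

noncomputable instance auxDecAdj (s : Set V) : DecidableRel (F.induce s).Adj := fun a b =>
  inferInstanceAs (Decidable (F.Adj a b))

lemma aux_induce_supp_degree (c : F.ConnectedComponent) (v : c.supp) :
    (F.induce c.supp).degree v = F.degree v.1 := by
  classical
  rw [← SimpleGraph.card_neighborSet_eq_degree, ← SimpleGraph.card_neighborSet_eq_degree]
  apply Fintype.card_congr
  refine ⟨fun w => ⟨w.1.1, w.2⟩, fun w => ⟨⟨w.1, ?_⟩, w.2⟩, ?_, ?_⟩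
  · have hv := v.2
    rw [SimpleGraph.ConnectedComponent.mem_supp_iff] at hv
    have h1 : F.connectedComponentMk w.1 = F.connectedComponentMk v.1 :=
      SimpleGraph.ConnectedComponent.sound ((w.2 : F.Adj v.1 w.1).symm.reachable)
    rw [SimpleGraph.ConnectedComponent.mem_supp_iff, h1, hv]
  · rintro ⟨⟨x, hx⟩, hw⟩; rfl
  · rintro ⟨x, hx⟩; rfl

end Aux

/-- Lemma 7(iii): if `F` is a forest with `ω` components, each of order at least 2,
and `S` contains all leaves of `F`, then `∑_{x ∈ S} d_F(x) ≤ 2|S| − 2ω`. -/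
theorem forest_leaf_set_degree_sum {V : Type*} [Fintype V] [DecidableEq V]
    (F : SimpleGraph V) [DecidableRel F.Adj]
    (hforest : F.IsAcyclic)
    (hnontrivial : ∀ v : V, ∃ w : V, F.Adj v w)
    (S : Finset V) (hS : ∀ v : V, F.degree v = 1 → v ∈ S) :
    ∑ v ∈ S, F.degree v ≤ 2 * S.card - 2 * Nat.card F.ConnectedComponent := by
  classical
  have key : ∀ c : F.ConnectedComponent,
      (∑ v ∈ S.filter (fun v => F.connectedComponentMk v = c), F.degree v) + 2
        ≤ 2 * (S.filter (fun v => F.connectedComponentMk v = c)).card := by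
    intro c
    set Sc := S.filter (fun v => F.connectedComponentMk v = c) with hSc
    have htree := aux_induce_supp_isTree F hforest c
    have hedge : (F.induce c.supp).edgeFinset.card + 1 = Fintype.card c.supp :=
      htree.card_edgeFinset
    have hsum : ∑ v : c.supp, (F.induce c.supp).degree v
        = 2 * (F.induce c.supp).edgeFinset.card :=
      SimpleGraph.sum_degrees_eq_twice_card_edges _
    have hsum2 : ∑ v ∈ c.supp.toFinset, F.degree v = 2 * (F.induce c.supp).edgeFinset.card := by
      rw [Finset.sum_subtype c.supp.toFinset (fun x => Set.mem_toFinset) (fun v => F.degree v)]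
      rw [← hsum]
      exact Finset.sum_congr rfl (fun v _ => (aux_induce_supp_degree F c v).symm)
    have hsubset : Sc ⊆ c.supp.toFinset := by
      intro v hv
      rw [hSc, Finset.mem_filter] at hv
      rw [Set.mem_toFinset, SimpleGraph.ConnectedComponent.mem_supp_iff]
      exact hv.2
    have hrest : (c.supp.toFinset \ Sc).card * 2 ≤ ∑ v ∈ c.supp.toFinset \ Sc, F.degree v := by
      have h2 : ∀ v ∈ c.supp.toFinset \ Sc, 2 ≤ F.degree v := by
        intro v hv
        rw [Finset.mem_sdiff] at hv
        have hpos : 0 < F.degree v := by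
          obtain ⟨w, hw⟩ := hnontrivial v
          rw [← SimpleGraph.card_neighborFinset_eq_degree]
          exact Finset.card_pos.mpr ⟨w, by simpa [SimpleGraph.mem_neighborFinset] using hw⟩
        have hne1 : F.degree v ≠ 1 := by
          intro h1
          apply hv.2
          rw [hSc, Finset.mem_filter]
          refine ⟨hS v h1, ?_⟩
          have := hv.1
          rwa [Set.mem_toFinset, SimpleGraph.ConnectedComponent.mem_supp_iff] at this
        omega
      simpa [smul_eq_mul, mul_comm] using
        Finset.card_nsmul_le_sum (c.supp.toFinset \ Sc) (fun v => F.degree v) 2 h2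
    have hsplit : (∑ v ∈ c.supp.toFinset \ Sc, F.degree v) + ∑ v ∈ Sc, F.degree v
        = ∑ v ∈ c.supp.toFinset, F.degree v := Finset.sum_sdiff hsubset
    have hcard := Finset.card_sdiff_of_subset hsubset
    have hle : Sc.card ≤ c.supp.toFinset.card := Finset.card_le_card hsubset
    have hcardsupp : c.supp.toFinset.card = Fintype.card c.supp := Set.toFinset_card _
    omega
  have hsum := Finset.sum_fiberwise S (fun v => F.connectedComponentMk v) (fun v => F.degree v)
  have hcard : ∑ c : F.ConnectedComponent,
      (S.filter (fun v => F.connectedComponentMk v = c)).card = S.card := by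
    simpa using Finset.sum_fiberwise S (fun v => F.connectedComponentMk v) (fun _ => (1 : ℕ))
  have h1 := Finset.sum_le_sum (fun c (_ : c ∈ Finset.univ) => key c)
  rw [Finset.sum_add_distrib, Finset.sum_const, ← Finset.mul_sum, hsum, hcard,
    Finset.card_univ, smul_eq_mul] at h1
  rw [Nat.card_eq_fintype_card]
  omega
end
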